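/- arXiv:1004.4127 — 2 statements merged into one kernel-verified Lean document; each statement's English description precedes it below -/
import Mathlib

section
/- Let Γ be a graph with at least 5 vertices and at least 3 vertices of degree ≥ 4, and let v ≡ 1 or 2 (mod 4). Then every (K_v,Γ)-design can be down-linked to a (K_{v-1},P₃)-design. -/
open SimpleGraph

/-- The complete graph on the set `s` of natural numbers, viewed as a graph on `ℕ`. -/
def Kon (s : Set ℕ) : SimpleGraph ℕ where
  Adj x y := x ≠ y ∧ x ∈ s ∧ y ∈ s
  symm := ⟨fun x y ⟨h, hx, hy⟩ => ⟨h.symm, hy, hx⟩⟩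
  loopless := ⟨fun x h => h.1 rfl⟩

/-- `B` is a copy of `Γ`: there is an injection of vertices under which the
edges of `B` are exactly the images of the edges of `Γ`. -/
def IsCopy {α β : Type*} (Γ : SimpleGraph α) (B : SimpleGraph β) : Prop :=
  ∃ φ : α ↪ β, ∀ x y : β, B.Adj x y ↔ ∃ a b, Γ.Adj a b ∧ φ a = x ∧ φ b = y

/-- A `(G, Γ)`-design: a set of copies of `Γ`, each a subgraph of `G` with
nonempty edge set, whose edge sets partition the edge set of `G`. -/
def IsDesign {α β : Type*} (G : SimpleGraph β) (Γ : SimpleGraph α)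
    (D : Set (SimpleGraph β)) : Prop :=
  (∀ B ∈ D, B ≤ G ∧ IsCopy Γ B ∧ B.edgeSet.Nonempty) ∧
  ∀ e ∈ G.edgeSet, ∃! B, B ∈ D ∧ e ∈ B.edgeSet

/-- A down-link from the design `D` to the design `D'`: each block is mapped
to a subgraph of itself. -/
def IsDownlink {β : Type*} (D D' : Set (SimpleGraph β))
    (f : SimpleGraph β → SimpleGraph β) : Prop :=
  ∀ B ∈ D, f B ∈ D' ∧ f B ≤ B

/-! In every block choose a cherry `a - u - b` (a copy of `P₃`) avoiding the vertices `0` and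
`v - 1`: one of the three vertices of degree `≥ 4` is neither of them, and it keeps two
neighbours that are neither. The blocks are edge-disjoint, so these cherries form a
`P₃`-design of their union `C ≤ K_{v-1}`. In the remainder `K_{v-1} \ C` the vertex `0` is
still adjacent to every other vertex lying on an edge, and the number of edges,
`(v-1)(v-2)/2 - 2|D|`, is even. Such a graph is peeled off cherry by cherry: take two edges at
some vertex `x ≠ 0` (using `x0` when `x` has only one other neighbour), or two edges at `0` if
all edges meet `0`; the adjacency property of `0` survives each step. -/

section

variable {α β V : Type*} {Γ : SimpleGraph α}

theorem isCopy_iff_exists_map_eq {B : SimpleGraph V} :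
    IsCopy Γ B ↔ ∃ φ : α ↪ V, Γ.map φ = B := by
  simp only [IsCopy, SimpleGraph.ext_iff, funext_iff, map_adj, eq_iff_iff]
  exact exists_congr fun φ => forall_congr' fun x => forall_congr' fun y => Iff.comm

theorem IsCopy.ncard_edgeSet {B : SimpleGraph V} (h : IsCopy Γ B) :
    B.edgeSet.ncard = Γ.edgeSet.ncard := by
  obtain ⟨φ, rfl⟩ := isCopy_iff_exists_map_eq.mp h
  rw [edgeSet_map, Set.ncard_image_of_injective _ φ.sym2Map.injective]

namespace IsDesign

variable {G : SimpleGraph V} {D : Set (SimpleGraph V)}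

theorem eq_of_mem_edgeSet (hD : IsDesign G Γ D) {B B' : SimpleGraph V} {e : Sym2 V}
    (hB : B ∈ D) (hB' : B' ∈ D) (he : e ∈ B.edgeSet) (he' : e ∈ B'.edgeSet) : B = B' :=
  (hD.2 e (edgeSet_mono (hD.1 B hB).1 he)).unique ⟨hB, he⟩ ⟨hB', he'⟩

theorem edgeSet_eq_biUnion (hD : IsDesign G Γ D) : G.edgeSet = ⋃ B ∈ D, B.edgeSet := by
  refine subset_antisymm (fun e he => ?_)
    (Set.iUnion₂_subset fun B hB => edgeSet_mono (hD.1 B hB).1)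
  obtain ⟨B, ⟨hB, heB⟩, -⟩ := hD.2 e he
  exact Set.mem_biUnion hB heB

theorem finite (hD : IsDesign G Γ D) (hG : G.edgeSet.Finite) : D.Finite := by
  choose e he using fun B (hB : B ∈ D) => (hD.1 B hB).2.2
  have := hG.to_subtype
  let edgeOf (B : D) : G.edgeSet := ⟨e B B.2, edgeSet_mono (hD.1 B B.2).1 (he B B.2)⟩
  refine Set.finite_coe_iff.mp (Finite.of_injective edgeOf fun B B' h => Subtype.ext ?_)
  have h' : e B B.2 = e B' B'.2 := congrArg Subtype.val h
  exact hD.eq_of_mem_edgeSet B.2 B'.2 (he B B.2) (h' ▸ he B' B'.2)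

theorem ncard_edgeSet (hD : IsDesign G Γ D) (hG : G.edgeSet.Finite) :
    G.edgeSet.ncard = D.ncard * Γ.edgeSet.ncard := by
  have hDfin := hD.finite hG
  rw [hD.edgeSet_eq_biUnion, hDfin.ncard_biUnion
    (fun B hB => hG.subset (edgeSet_mono (hD.1 B hB).1))
    (fun B hB B' hB' hne => Set.disjoint_left.mpr fun e he he' =>
      hne (hD.eq_of_mem_edgeSet hB hB' he he')),
    finsum_mem_congr rfl fun B hB => (hD.1 B hB).2.1.ncard_edgeSet,
    finsum_mem_eq_finite_toFinset_sum _ hDfin, Finset.sum_const, smul_eq_mul,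
    Set.ncard_eq_toFinset_card _ hDfin]

theorem sup {G' : SimpleGraph V} {D' : Set (SimpleGraph V)} (hD : IsDesign G Γ D)
    (hD' : IsDesign G' Γ D') (h : Disjoint G G') : IsDesign (G ⊔ G') Γ (D ∪ D') := by
  have hdisj := disjoint_edgeSet.mpr h
  refine ⟨?_, fun e he => ?_⟩
  · rintro B (hB | hB)
    · exact ⟨(hD.1 B hB).1.trans le_sup_left, (hD.1 B hB).2⟩
    · exact ⟨(hD'.1 B hB).1.trans le_sup_right, (hD'.1 B hB).2⟩
  rcases (edgeSet_sup G G' ▸ he : e ∈ G.edgeSet ∪ G'.edgeSet) with he | he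
  · obtain ⟨B, ⟨hB, heB⟩, huniq⟩ := hD.2 e he
    refine ⟨B, ⟨Or.inl hB, heB⟩, ?_⟩
    rintro B' ⟨hB' | hB', heB'⟩
    · exact huniq B' ⟨hB', heB'⟩
    · exact absurd (edgeSet_mono (hD'.1 B' hB').1 heB') (Set.disjoint_left.mp hdisj he)
  · obtain ⟨B, ⟨hB, heB⟩, huniq⟩ := hD'.2 e he
    refine ⟨B, ⟨Or.inr hB, heB⟩, ?_⟩
    rintro B' ⟨hB' | hB', heB'⟩
    · exact absurd (edgeSet_mono (hD.1 B' hB').1 heB') (Set.disjoint_right.mp hdisj he)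
    · exact huniq B' ⟨hB', heB'⟩

theorem image {Γ' : SimpleGraph β} (hD : IsDesign G Γ D) (f : SimpleGraph V → SimpleGraph V)
    (hf : ∀ B ∈ D, f B ≤ B ∧ IsCopy Γ' (f B) ∧ (f B).edgeSet.Nonempty) :
    IsDesign (⨆ B ∈ D, f B) Γ' (f '' D) := by
  refine ⟨?_, fun e he => ?_⟩
  · rintro _ ⟨B, hB, rfl⟩
    exact ⟨le_iSup₂ (f := fun B _ => f B) B hB, (hf B hB).2⟩
  simp only [edgeSet_iSup, Set.mem_iUnion] at he
  obtain ⟨B, hB, he⟩ := he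
  refine ⟨f B, ⟨Set.mem_image_of_mem f hB, he⟩, ?_⟩
  rintro _ ⟨⟨B', hB', rfl⟩, he'⟩
  rw [hD.eq_of_mem_edgeSet hB' hB (edgeSet_mono (hf B' hB').1 he') (edgeSet_mono (hf B hB).1 he)]

end IsDesign

theorem isDesign_bot : IsDesign (⊥ : SimpleGraph V) Γ ∅ :=
  ⟨fun _ h => by simp at h, fun _ h => by simp at h⟩

theorem isDesign_singleton {B : SimpleGraph V} (hB : IsCopy Γ B) (hne : B.edgeSet.Nonempty) :
    IsDesign B Γ {B} :=
  ⟨by rintro _ rfl; exact ⟨le_rfl, hB, hne⟩,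
    fun _ he => ⟨B, ⟨rfl, he⟩, fun _ h => h.1⟩⟩

namespace SimpleGraph

def cherry (a u b : V) : SimpleGraph V := edge u a ⊔ edge u b

variable {a u b : V}

theorem cherry_adj {x y : V} :
    (cherry a u b).Adj x y ↔
      (x = u ∧ y = a ∨ x = a ∧ y = u ∨ x = u ∧ y = b ∨ x = b ∧ y = u) ∧ x ≠ y := by
  simp only [cherry, sup_adj, edge_adj]
  tauto

theorem cherry_le {G : SimpleGraph V} (ha : G.Adj u a) (hb : G.Adj u b) : cherry a u b ≤ G :=
  sup_le ((edge_le_iff _).mpr (.inr ha)) ((edge_le_iff _).mpr (.inr hb))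

theorem edgeSet_cherry (ha : a ≠ u) (hb : b ≠ u) :
    (cherry a u b).edgeSet = {s(u, a), s(u, b)} := by
  rw [cherry, edgeSet_sup, edgeSet_edge_of_ne ha.symm, edgeSet_edge_of_ne hb.symm]
  rfl

theorem edgeSet_cherry_nonempty (ha : a ≠ u) : (cherry a u b).edgeSet.Nonempty :=
  ⟨s(u, a), cherry_adj.mpr ⟨.inl ⟨rfl, rfl⟩, ha.symm⟩⟩

theorem isCopy_cherry (ha : a ≠ u) (hb : b ≠ u) (hab : a ≠ b) :
    IsCopy (pathGraph 3) (cherry a u b) := by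
  have hinj : Function.Injective ![a, u, b] := by
    intro i j h
    fin_cases i <;> fin_cases j <;> simp_all [eq_comm]
  refine ⟨⟨![a, u, b], hinj⟩, fun x y => ⟨fun h => ?_, ?_⟩⟩
  · obtain ⟨⟨rfl, rfl⟩ | ⟨rfl, rfl⟩ | ⟨rfl, rfl⟩ | ⟨rfl, rfl⟩, -⟩ := cherry_adj.mp h
    exacts [⟨1, 0, by simp [pathGraph_adj], rfl, rfl⟩, ⟨0, 1, by simp [pathGraph_adj], rfl, rfl⟩,
      ⟨1, 2, by simp [pathGraph_adj], rfl, rfl⟩, ⟨2, 1, by simp [pathGraph_adj], rfl, rfl⟩]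
  · rintro ⟨i, j, hij, rfl, rfl⟩
    fin_cases i <;> fin_cases j <;> simp_all [pathGraph_adj, cherry_adj, eq_comm]

theorem ncard_edgeSet_pathGraph_three : (pathGraph 3).edgeSet.ncard = 2 := by
  rw [← (isCopy_cherry (V := ℕ) (a := 0) (u := 1) (b := 2) (by simp) (by simp)
    (by simp)).ncard_edgeSet,
    edgeSet_cherry (by simp) (by simp), Set.ncard_pair (by simp)]

theorem exists_cherry_avoiding [Fintype α] [DecidableRel Γ.Adj]
    (hdeg : 3 ≤ (Finset.univ.filter fun a => 4 ≤ Γ.degree a).card) (s : Finset α)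
    (hs : s.card ≤ 2) :
    ∃ a u b, a ≠ b ∧ Γ.Adj u a ∧ Γ.Adj u b ∧ a ∉ s ∧ u ∉ s ∧ b ∉ s := by
  classical
  obtain ⟨u, hu⟩ : ((Finset.univ.filter fun a => 4 ≤ Γ.degree a) \ s).Nonempty := by
    have := Finset.le_card_sdiff s (Finset.univ.filter fun a => 4 ≤ Γ.degree a)
    rw [← Finset.card_pos]
    omega
  rw [Finset.mem_sdiff, Finset.mem_filter] at hu
  obtain ⟨a, ha, b, hb, hab⟩ := Finset.one_lt_card.mp (by
    have := Finset.le_card_sdiff s (Γ.neighborFinset u)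
    rw [card_neighborFinset_eq_degree] at this
    omega : 1 < (Γ.neighborFinset u \ s).card)
  rw [Finset.mem_sdiff, mem_neighborFinset] at ha hb
  exact ⟨a, u, b, hab, ha.1, hb.1, ha.2, hu.2, hb.2⟩

def IsHub (G : SimpleGraph V) (c : V) : Prop :=
  ∀ ⦃x y⦄, G.Adj x y → x ≠ c → G.Adj c x

theorem IsHub.exists_cherry_isHub_sdiff {G : SimpleGraph V} {c : V} (hG : G.IsHub c)
    (h2 : 1 < G.edgeSet.ncard) :
    ∃ a u b, a ≠ b ∧ G.Adj u a ∧ G.Adj u b ∧ (G \ cherry a u b).IsHub c := by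
  by_cases hxy : ∃ x y, G.Adj x y ∧ x ≠ c ∧ y ≠ c
  · obtain ⟨x, y, hxy, hxc, hyc⟩ := hxy
    by_cases hz : ∃ z, G.Adj x z ∧ z ≠ y ∧ z ≠ c
    · obtain ⟨z, hxz, hzy, hzc⟩ := hz
      refine ⟨y, x, z, hzy.symm, hxy, hxz, fun p q hpq hpc => ⟨hG hpq.1 hpc, ?_⟩⟩
      rw [cherry_adj]
      grind
    · push Not at hz
      -- `x` has no neighbour besides `y` and `c`, so removing `xy` and `xc` isolates `x`.
      refine ⟨y, x, c, hyc, hxy, (hG hxy hxc).symm, fun p q hpq hpc => ⟨hG hpq.1 hpc, ?_⟩⟩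
      rintro hcp
      obtain rfl : p = x := by rw [cherry_adj] at hcp; grind
      refine hpq.2 (cherry_adj.mpr ⟨?_, hpq.1.ne⟩)
      by_cases hqy : q = y
      · exact .inl ⟨rfl, hqy⟩
      · exact .inr (.inr (.inl ⟨rfl, hz q hpq.1 hqy⟩))
  · push Not at hxy
    have hstar : ∀ e ∈ G.edgeSet, ∃ w, G.Adj c w ∧ e = s(c, w) := by
      intro e
      induction e using Sym2.ind with
      | _ x y =>
        intro h
        by_cases hx : x = c
        · exact ⟨y, hx ▸ h, hx ▸ rfl⟩
        · exact ⟨x, hxy x y h hx ▸ h.symm, hxy x y h hx ▸ Sym2.eq_swap⟩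
    obtain ⟨e₁, e₂, he₁, he₂, hne⟩ :=
      (Set.one_lt_ncard_iff (Set.finite_of_ncard_pos (by omega))).mp h2
    obtain ⟨a, ha, rfl⟩ := hstar e₁ he₁
    obtain ⟨b, hb, rfl⟩ := hstar e₂ he₂
    refine ⟨a, c, b, fun h => hne (h ▸ rfl), ha, hb, fun p q hpq hpc => ?_⟩
    exact (hxy p q hpq.1 hpc ▸ hpq).symm

theorem IsHub.exists_isDesign_pathGraph_three {G : SimpleGraph V} {c : V} (hG : G.IsHub c)
    (hfin : G.edgeSet.Finite) (heven : Even G.edgeSet.ncard) :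
    ∃ D, IsDesign G (pathGraph 3) D := by
  induction hn : G.edgeSet.ncard using Nat.strong_induction_on generalizing G with
  | _ n ih =>
  rcases Nat.eq_zero_or_pos n with rfl | hpos
  · rw [Set.ncard_eq_zero hfin, edgeSet_eq_empty] at hn
    exact ⟨∅, hn ▸ isDesign_bot⟩
  obtain ⟨a, u, b, hab, ha, hb, hG'⟩ := hG.exists_cherry_isHub_sdiff (by grind)
  have hle := cherry_le ha hb
  have hcard : (G \ cherry a u b).edgeSet.ncard = n - 2 := by
    rw [edgeSet_sdiff, Set.ncard_sdiff' (edgeSet_mono hle) hfin, edgeSet_cherry ha.ne' hb.ne',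
      Set.ncard_pair (by simp [hab, ha.ne']), hn]
  obtain ⟨D, hD⟩ :=
    ih (n - 2) (by omega) hG' (hfin.subset (edgeSet_mono sdiff_le)) (by grind) hcard
  have := (isDesign_singleton (isCopy_cherry ha.ne' hb.ne' hab)
    (edgeSet_cherry_nonempty ha.ne')).sup hD disjoint_sdiff_self_right
  exact ⟨_, sup_sdiff_cancel_right hle ▸ this⟩

end SimpleGraph

theorem IsCopy.exists_cherry_avoiding [Fintype α] [DecidableRel Γ.Adj] {B : SimpleGraph V}
    (hB : IsCopy Γ B)
    (hdeg : 3 ≤ (Finset.univ.filter fun a => 4 ≤ Γ.degree a).card) (s : Finset V)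
    (hs : s.card ≤ 2) :
    ∃ a u b, a ≠ b ∧ B.Adj u a ∧ B.Adj u b ∧ a ∉ s ∧ u ∉ s ∧ b ∉ s := by
  classical
  obtain ⟨φ, rfl⟩ := isCopy_iff_exists_map_eq.mp hB
  obtain ⟨a, u, b, hab, hua, hub, ha, hu, hb⟩ := SimpleGraph.exists_cherry_avoiding hdeg
    (Finset.univ.filter (φ · ∈ s))
    (le_trans (Finset.card_le_card_of_injOn φ (by simp [Set.MapsTo]) φ.injective.injOn) hs)
  simp only [Finset.mem_filter, Finset.mem_univ, true_and] at ha hu hb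
  exact ⟨φ a, φ u, φ b, φ.injective.ne hab, map_adj_apply.mpr hua, map_adj_apply.mpr hub,
    ha, hu, hb⟩

theorem IsDesign.exists_isDownlink_pathGraph_three {G K : SimpleGraph V} {D : Set (SimpleGraph V)}
    {c : V} (hD : IsDesign G Γ D) (hK : K.IsHub c)
    (hKfin : K.edgeSet.Finite) (hKeven : Even K.edgeSet.ncard) (P : SimpleGraph V → SimpleGraph V)
    (hP : ∀ B ∈ D, P B ≤ B ⊓ K ∧ IsCopy (pathGraph 3) (P B) ∧ (P B).edgeSet.Nonempty ∧
      ∀ x, ¬(P B).Adj c x) :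
    ∃ D', IsDesign K (pathGraph 3) D' ∧ IsDownlink D D' P := by
  have hC := hD.image P fun B hB =>
    ⟨(hP B hB).1.trans inf_le_left, (hP B hB).2.1, (hP B hB).2.2.1⟩
  have hCK : (⨆ B ∈ D, P B) ≤ K := iSup₂_le fun B hB => (hP B hB).1.trans inf_le_right
  have hR : (K \ ⨆ B ∈ D, P B).IsHub c := by
    refine fun x y hxy hx => ⟨hK hxy.1 hx, ?_⟩
    simp only [iSup_adj, not_exists]
    exact fun B hB => (hP B hB).2.2.2 x
  have hReven : Even (K \ ⨆ B ∈ D, P B).edgeSet.ncard := by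
    have hCeven := hC.ncard_edgeSet (hKfin.subset (edgeSet_mono hCK))
    rw [ncard_edgeSet_pathGraph_three] at hCeven
    rw [edgeSet_sdiff, Set.ncard_sdiff' (edgeSet_mono hCK) hKfin,
      Nat.even_sub (Set.ncard_le_ncard (edgeSet_mono hCK) hKfin), hCeven]
    simpa using hKeven
  obtain ⟨D₂, hD₂⟩ :=
    hR.exists_isDesign_pathGraph_three (hKfin.subset (edgeSet_mono sdiff_le)) hReven
  refine ⟨P '' D ∪ D₂, sup_sdiff_cancel_right hCK ▸ hC.sup hD₂ disjoint_sdiff_self_right,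
    fun B hB => ⟨.inl (Set.mem_image_of_mem P hB), (hP B hB).1.trans inf_le_left⟩⟩

theorem Kon_Iio_eq_map (m : ℕ) :
    Kon (Set.Iio m) = (⊤ : SimpleGraph (Fin m)).map Fin.valEmbedding := by
  ext x y
  rw [map_adj]
  constructor
  · rintro ⟨hxy, hx, hy⟩
    exact ⟨⟨x, hx⟩, ⟨y, hy⟩, by simpa [Fin.ext_iff] using hxy, rfl, rfl⟩
  · rintro ⟨x, y, hxy, rfl, rfl⟩
    exact ⟨Fin.val_injective.ne hxy, x.2, y.2⟩

theorem finite_edgeSet_Kon_Iio (m : ℕ) : (Kon (Set.Iio m)).edgeSet.Finite := by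
  rw [Kon_Iio_eq_map, edgeSet_map]
  exact (Set.toFinite _).image _

theorem ncard_edgeSet_Kon_Iio (m : ℕ) : (Kon (Set.Iio m)).edgeSet.ncard = m.choose 2 := by
  rw [(isCopy_iff_exists_map_eq.mpr ⟨_, (Kon_Iio_eq_map m).symm⟩).ncard_edgeSet,
    Set.ncard_eq_toFinset_card', ← edgeFinset, card_edgeFinset_top_eq_card_choose_two,
    Fintype.card_fin]

theorem isHub_Kon_Iio (m : ℕ) : (Kon (Set.Iio m)).IsHub 0 := by
  rintro x y ⟨-, hx, -⟩ hx0
  exact ⟨hx0.symm, lt_of_le_of_lt (Nat.zero_le x) hx, hx⟩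

theorem Nat.even_choose_two_of_mod_four {n : ℕ} (h : n % 4 = 0 ∨ n % 4 = 1) :
    Even (n.choose 2) := by
  rw [Nat.choose_two_right, Nat.even_iff]
  have h4 : 4 ∣ n * (n - 1) := by
    rcases h with h | h
    · exact Dvd.dvd.mul_right (Nat.dvd_of_mod_eq_zero h) _
    · exact Dvd.dvd.mul_left (by omega) _
  omega

theorem IsCopy.exists_cherry_le_inf_Kon_Iio_pred [Fintype α] [DecidableRel Γ.Adj]
    {B : SimpleGraph ℕ} (hB : IsCopy Γ B)
    (hdeg : 3 ≤ (Finset.univ.filter fun a => 4 ≤ Γ.degree a).card) {v : ℕ}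
    (hBK : B ≤ Kon (Set.Iio v)) :
    ∃ P : SimpleGraph ℕ, P ≤ B ⊓ Kon (Set.Iio (v - 1)) ∧ IsCopy (pathGraph 3) P ∧
      P.edgeSet.Nonempty ∧ ∀ x, ¬P.Adj 0 x := by
  obtain ⟨a, u, b, hab, hua, hub, ha, hu, hb⟩ :=
    hB.exists_cherry_avoiding hdeg {0, v - 1} Finset.card_le_two
  simp only [Finset.mem_insert, Finset.mem_singleton, not_or] at ha hu hb
  have hK : ∀ {x}, B.Adj u x → x ≠ v - 1 → (B ⊓ Kon (Set.Iio (v - 1))).Adj u x := by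
    intro x hux hx
    obtain ⟨hne, hu', hx'⟩ := hBK hux
    simp only [Set.mem_Iio] at hu' hx'
    exact ⟨hux, hne, show u < v - 1 by omega, show x < v - 1 by omega⟩
  refine ⟨cherry a u b, cherry_le (hK hua ha.2) (hK hub hb.2), isCopy_cherry hua.ne' hub.ne' hab,
    edgeSet_cherry_nonempty hua.ne', fun x h => ?_⟩
  rw [cherry_adj] at h
  grind

end

theorem stmt6_general {α : Type*} [Fintype α] (Γ : SimpleGraph α)
    [DecidableRel Γ.Adj]
    (hdeg : 3 ≤ (Finset.univ.filter fun a => 4 ≤ Γ.degree a).card)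
    (v : ℕ) (hv : v % 4 = 1 ∨ v % 4 = 2)
    (D : Set (SimpleGraph ℕ)) (hD : IsDesign (Kon (Set.Iio v)) Γ D) :
    ∃ D' : Set (SimpleGraph ℕ),
      IsDesign (Kon (Set.Iio (v - 1))) (pathGraph 3) D' ∧
      ∃ f, IsDownlink D D' f := by
  have hblock : ∀ B ∈ D, ∃ P : SimpleGraph ℕ, P ≤ B ⊓ Kon (Set.Iio (v - 1)) ∧
      IsCopy (pathGraph 3) P ∧ P.edgeSet.Nonempty ∧ ∀ x, ¬P.Adj 0 x :=
    fun B hB => (hD.1 B hB).2.1.exists_cherry_le_inf_Kon_Iio_pred hdeg (hD.1 B hB).1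
  choose! P hP using hblock
  have hKeven : Even (Kon (Set.Iio (v - 1))).edgeSet.ncard :=
    ncard_edgeSet_Kon_Iio (v - 1) ▸ Nat.even_choose_two_of_mod_four (by omega)
  obtain ⟨D', hD', hP'⟩ := hD.exists_isDownlink_pathGraph_three (isHub_Kon_Iio _)
    (finite_edgeSet_Kon_Iio _) hKeven P hP
  exact ⟨D', hD', P, hP'⟩

/-- If `Γ` has at least 5 vertices and at least 3 vertices of degree ≥ 4 and
`v ≡ 1, 2 (mod 4)`, then every `(K_v,Γ)`-design can be down-linked to a
`(K_{v-1},P₃)`-design. -/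
theorem stmt6 {α : Type*} [Fintype α] [DecidableEq α] (Γ : SimpleGraph α)
    [DecidableRel Γ.Adj] (hcard : 5 ≤ Fintype.card α)
    (hdeg : 3 ≤ (Finset.univ.filter fun a => 4 ≤ Γ.degree a).card)
    (v : ℕ) (hv : v % 4 = 1 ∨ v % 4 = 2)
    (D : Set (SimpleGraph ℕ)) (hD : IsDesign (Kon (Set.Iio v)) Γ D) :
    ∃ D' : Set (SimpleGraph ℕ),
      IsDesign (Kon (Set.Iio (v - 1))) (pathGraph 3) D' ∧
      ∃ f, IsDownlink D D' f :=
  stmt6_general Γ hdeg v hv D hD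
end

section
/- For every admissible v (i.e., v ≡ 1 mod 8, v ≥ 8) and every (K_v,C₄)-design B, and for every n ≥ v−1 with n ≡ 0,1 (mod 4), B can be down-linked to a (K_n,P₃)-design. In particular, fixing any vertex x of K_v, deleting from each 4-cycle through x the two edges at x yields a P₃, and the remaining blocks split into two P₃'s each, giving a down-link to a (K_{v−1},P₃)-design. -/
/-!
Write `v = m + 1` and delete the vertex `m` of `K_v`. The two edges of a 4-cycle through `m` that
avoid `m` form a `P₃`, and a 4-cycle missing `m` splits into two `P₃`s; this is a
`(K_m, P₃)`-design in which each block of the `C₄`-design contains a block of its own, which gives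
the down-link. The edges of `K_n` with an endpoint in `[m, n)` are decomposed into `P₃`s directly,
centred at their larger endpoint; here `m ≡ 0` and `n ≡ 0, 1 (mod 4)` are used.
-/

open SimpleGraph

variable {α β : Type*}

section Designs

variable {G G₁ G₂ : SimpleGraph β} {Γ : SimpleGraph α} {D D₁ D₂ : Set (SimpleGraph β)}

theorem IsDesign.of_cover (hblock : ∀ B ∈ D, B ≤ G ∧ IsCopy Γ B ∧ B.edgeSet.Nonempty)
    (hcover : ∀ e ∈ G.edgeSet, ∃ B ∈ D, e ∈ B.edgeSet)
    (hunique : ∀ B ∈ D, ∀ B' ∈ D, ∀ e ∈ B.edgeSet, e ∈ B'.edgeSet → B = B') :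
    IsDesign G Γ D := by
  refine ⟨hblock, fun e he => ?_⟩
  obtain ⟨B, hB, heB⟩ := hcover e he
  exact ⟨B, ⟨hB, heB⟩, fun B' ⟨hB', heB'⟩ => hunique B' hB' B hB e heB' heB⟩

theorem IsDesign.mem_edgeSet (hD : IsDesign G Γ D) {B : SimpleGraph β} (hB : B ∈ D)
    {e : Sym2 β} (he : e ∈ B.edgeSet) : e ∈ G.edgeSet :=
  edgeSet_mono (hD.1 B hB).1 he

theorem IsDesign.eq_of_mem_edgeSet_s11 (hD : IsDesign G Γ D) {B B' : SimpleGraph β} (hB : B ∈ D)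
    (hB' : B' ∈ D) {e : Sym2 β} (he : e ∈ B.edgeSet) (he' : e ∈ B'.edgeSet) : B = B' :=
  (hD.2 e (hD.mem_edgeSet hB he)).unique ⟨hB, he⟩ ⟨hB', he'⟩

theorem IsDesign.sup_s11 (h₁ : IsDesign G₁ Γ D₁) (h₂ : IsDesign G₂ Γ D₂) (h : Disjoint G₁ G₂) :
    IsDesign (G₁ ⊔ G₂) Γ (D₁ ∪ D₂) := by
  have hdisj := Set.disjoint_left.1 (disjoint_edgeSet.2 h)
  refine .of_cover ?_ ?_ ?_
  · rintro B (hB | hB)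
    · obtain ⟨hle, hΓ, hne⟩ := h₁.1 B hB
      exact ⟨hle.trans le_sup_left, hΓ, hne⟩
    · obtain ⟨hle, hΓ, hne⟩ := h₂.1 B hB
      exact ⟨hle.trans le_sup_right, hΓ, hne⟩
  · intro e he
    rcases (edgeSet_sup G₁ G₂ ▸ he) with he | he
    · obtain ⟨B, ⟨hB, heB⟩, -⟩ := h₁.2 e he
      exact ⟨B, .inl hB, heB⟩
    · obtain ⟨B, ⟨hB, heB⟩, -⟩ := h₂.2 e he
      exact ⟨B, .inr hB, heB⟩
  · rintro B (hB | hB) B' (hB' | hB') e he he'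
    · exact h₁.eq_of_mem_edgeSet_s11 hB hB' he he'
    · exact absurd (h₂.mem_edgeSet hB' he') (hdisj (h₁.mem_edgeSet hB he))
    · exact absurd (h₂.mem_edgeSet hB he) (hdisj (h₁.mem_edgeSet hB' he'))
    · exact h₂.eq_of_mem_edgeSet_s11 hB hB' he he'

theorem IsDownlink.mono {f : SimpleGraph β → SimpleGraph β} (hf : IsDownlink D D₁ f)
    (hD : D₁ ⊆ D₂) : IsDownlink D D₂ f :=
  fun B hB => ⟨hD (hf B hB).1, (hf B hB).2⟩

theorem isCopy_iff_exists_eq_map {B : SimpleGraph β} : IsCopy Γ B ↔ ∃ φ : α ↪ β, B = Γ.map φ := by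
  simp only [IsCopy, SimpleGraph.ext_iff, funext_iff, map_adj, eq_iff_iff]

theorem map_eq_fromEdgeSet (φ : α ↪ β) (Γ : SimpleGraph α) :
    Γ.map φ = fromEdgeSet (φ.sym2Map '' Γ.edgeSet) := by
  rw [← edgeSet_map, fromEdgeSet_edgeSet]

end Designs

section PathsAndCycles

def path3 (a b c : β) : SimpleGraph β := fromEdgeSet {s(a, b), s(b, c)}

def cycle4 (a b c d : β) : SimpleGraph β := fromEdgeSet {s(a, b), s(b, c), s(c, d), s(d, a)}

variable {a b c d : β}

theorem edgeSet_path3 (hab : a ≠ b) (hbc : b ≠ c) : (path3 a b c).edgeSet = {s(a, b), s(b, c)} := by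
  rw [path3, edgeSet_fromEdgeSet, sdiff_eq_left, Set.disjoint_left]
  rintro e (rfl | rfl) <;> simpa

theorem mem_edgeSet_path3 (hab : a ≠ b) (hbc : b ≠ c) {e : Sym2 β} :
    e ∈ (path3 a b c).edgeSet ↔ e = s(a, b) ∨ e = s(b, c) := by
  simp [edgeSet_path3 hab hbc]

theorem path3_le {G : SimpleGraph β} (hab : G.Adj a b) (hbc : G.Adj b c) : path3 a b c ≤ G := by
  rw [← edgeSet_subset_edgeSet, edgeSet_path3 hab.ne hbc.ne]
  simp [Set.insert_subset_iff, hab, hbc]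

theorem path3_edgeSet_nonempty (hab : a ≠ b) (hbc : b ≠ c) : (path3 a b c).edgeSet.Nonempty := by
  simp [edgeSet_path3 hab hbc]

theorem map_pathGraph_three (φ : Fin 3 ↪ β) : (pathGraph 3).map φ = path3 (φ 0) (φ 1) (φ 2) := by
  have : (pathGraph 3).edgeSet = {s(0, 1), s(1, 2)} := by
    ext e; induction e with | _ i j => ?_
    simp only [mem_edgeSet, pathGraph_adj, Set.mem_insert_iff, Set.mem_singleton_iff]
    revert i j; decide
  simp [map_eq_fromEdgeSet, this, Set.image_insert_eq, path3]

theorem map_cycleGraph_four (φ : Fin 4 ↪ β) :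
    (cycleGraph 4).map φ = cycle4 (φ 0) (φ 1) (φ 2) (φ 3) := by
  have : (cycleGraph 4).edgeSet = {s(0, 1), s(1, 2), s(2, 3), s(3, 0)} := by
    ext e; induction e with | _ i j => ?_
    simp only [mem_edgeSet, cycleGraph_adj, Set.mem_insert_iff, Set.mem_singleton_iff]
    revert i j; decide
  simp [map_eq_fromEdgeSet, this, Set.image_insert_eq, cycle4]

theorem isCopy_path3 (hab : a ≠ b) (hbc : b ≠ c) (hac : a ≠ c) :
    IsCopy (pathGraph 3) (path3 a b c) := by
  have hinj : Function.Injective ![a, b, c] := by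
    intro i j; fin_cases i <;> fin_cases j <;> simp [*, Ne.symm]
  exact isCopy_iff_exists_eq_map.2 ⟨⟨_, hinj⟩, (map_pathGraph_three ⟨_, hinj⟩).symm⟩

theorem cycle4_rotate (a b c d : β) : cycle4 a b c d = cycle4 b c d a := by
  simp only [cycle4]
  congr 1
  ext e
  simp only [Set.mem_insert_iff, Set.mem_singleton_iff]
  tauto

theorem cycle4_eq_sup (a b c d : β) : cycle4 a b c d = path3 b c d ⊔ path3 d a b := by
  ext u v
  simp only [cycle4, path3, sup_adj, fromEdgeSet_adj, Set.mem_insert_iff, Set.mem_singleton_iff]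
  tauto

theorem IsCopy.exists_eq_cycle4_rooted {B : SimpleGraph β} (hB : IsCopy (cycleGraph 4) B) (x : β) :
    ∃ φ : Fin 4 ↪ β, B = cycle4 (φ 0) (φ 1) (φ 2) (φ 3) ∧ x ≠ φ 1 ∧ x ≠ φ 2 ∧ x ≠ φ 3 := by
  obtain ⟨φ, rfl⟩ := isCopy_iff_exists_eq_map.1 hB
  obtain ⟨i, hi⟩ : ∃ i : Fin 4, ∀ j ≠ 0, x ≠ φ (j + i) := by
    by_cases hx : ∃ i, φ i = x
    · obtain ⟨i, rfl⟩ := hx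
      exact ⟨i, fun j hj h => hj (by simpa using φ.injective h.symm)⟩
    · simp only [not_exists] at hx
      exact ⟨0, fun j _ h => hx _ h.symm⟩
  refine ⟨(Equiv.addRight i).toEmbedding.trans φ, ?_, hi 1 (by decide), hi 2 (by decide),
    hi 3 (by decide)⟩
  rw [map_cycleGraph_four]
  fin_cases i <;> simp [cycle4_rotate (φ 0), cycle4_rotate (φ 1), cycle4_rotate (φ 2)]

end PathsAndCycles

section DeleteVertex

variable {G B P Q H H' : SimpleGraph β} {D : Set (SimpleGraph β)} {x : β} {e : Sym2 β}

theorem mem_edgeSet_deleteIncidenceSet :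
    e ∈ (G.deleteIncidenceSet x).edgeSet ↔ e ∈ G.edgeSet ∧ x ∉ e := by
  rw [edgeSet_deleteIncidenceSet, incidenceSet, Set.mem_sdiff, Set.mem_ofPred_eq]
  tauto

theorem le_deleteIncidenceSet (hle : H ≤ G) (hx : x ∉ H.support) : H ≤ G.deleteIncidenceSet x := by
  intro u v huv
  rw [deleteIncidenceSet_adj]
  exact ⟨hle huv, fun h => hx ⟨v, h ▸ huv⟩, fun h => hx ⟨u, h ▸ huv.symm⟩⟩

/-- If `x` lies on the 4-cycle `B`, it is the vertex `φ 0`: then `P` avoids `x` and `Q` consists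
of the two edges at `x`. -/
def IsSplitAt (x : β) (B P Q : SimpleGraph β) : Prop :=
  ∃ φ : Fin 4 ↪ β, B = cycle4 (φ 0) (φ 1) (φ 2) (φ 3) ∧ x ≠ φ 1 ∧ x ≠ φ 2 ∧ x ≠ φ 3 ∧
    P = path3 (φ 1) (φ 2) (φ 3) ∧ Q = path3 (φ 3) (φ 0) (φ 1)

theorem IsCopy.exists_isSplitAt (hB : IsCopy (cycleGraph 4) B) (x : β) :
    ∃ P Q, IsSplitAt x B P Q := by
  obtain ⟨φ, hB, h1, h2, h3⟩ := hB.exists_eq_cycle4_rooted x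
  exact ⟨_, _, φ, hB, h1, h2, h3, rfl, rfl⟩

namespace IsSplitAt

theorem sup_eq (h : IsSplitAt x B P Q) : P ⊔ Q = B := by
  obtain ⟨φ, rfl, -, -, -, rfl, rfl⟩ := h
  exact (cycle4_eq_sup ..).symm

theorem left_le (h : IsSplitAt x B P Q) : P ≤ B := h.sup_eq ▸ le_sup_left

theorem right_le (h : IsSplitAt x B P Q) : Q ≤ B := h.sup_eq ▸ le_sup_right

theorem disjoint (h : IsSplitAt x B P Q) : Disjoint P Q := by
  obtain ⟨φ, -, -, -, -, rfl, rfl⟩ := h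
  rw [← disjoint_edgeSet, edgeSet_path3 (φ.injective.ne (by decide)) (φ.injective.ne (by decide)),
    edgeSet_path3 (φ.injective.ne (by decide)) (φ.injective.ne (by decide))]
  simp [φ.injective.eq_iff]

theorem isCopy_left (h : IsSplitAt x B P Q) : IsCopy (pathGraph 3) P ∧ P.edgeSet.Nonempty := by
  obtain ⟨φ, -, -, -, -, rfl, -⟩ := h
  exact ⟨isCopy_path3 (φ.injective.ne (by decide)) (φ.injective.ne (by decide))
    (φ.injective.ne (by decide)), path3_edgeSet_nonempty (φ.injective.ne (by decide))
    (φ.injective.ne (by decide))⟩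

theorem isCopy_right (h : IsSplitAt x B P Q) : IsCopy (pathGraph 3) Q ∧ Q.edgeSet.Nonempty := by
  obtain ⟨φ, -, -, -, -, -, rfl⟩ := h
  exact ⟨isCopy_path3 (φ.injective.ne (by decide)) (φ.injective.ne (by decide))
    (φ.injective.ne (by decide)), path3_edgeSet_nonempty (φ.injective.ne (by decide))
    (φ.injective.ne (by decide))⟩

theorem notMem_support_left (h : IsSplitAt x B P Q) : x ∉ P.support := by
  obtain ⟨φ, -, h1, h2, h3, rfl, -⟩ := h
  rintro ⟨w, hw⟩
  simp only [path3, fromEdgeSet_adj, Set.mem_insert_iff, Set.mem_singleton_iff, Sym2.eq_iff] at hw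
  aesop

theorem deleteIncidenceSet_le (h : IsSplitAt x B P Q) (hx : x ∈ B.support) :
    B.deleteIncidenceSet x ≤ P := by
  obtain ⟨φ, rfl, h1, h2, h3, rfl, -⟩ := h
  obtain ⟨w, hw⟩ := hx
  intro u v huv
  simp only [deleteIncidenceSet_adj, cycle4, path3, fromEdgeSet_adj, Set.mem_insert_iff,
    Set.mem_singleton_iff, Sym2.eq_iff] at hw huv ⊢
  aesop

theorem eq_of_mem_edgeSet_s11 (h : IsSplitAt x B P Q) (hH : H = P ∨ H = Q) (hH' : H' = P ∨ H' = Q)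
    (he : e ∈ H.edgeSet) (he' : e ∈ H'.edgeSet) : H = H' := by
  have hPQ := Set.disjoint_left.1 (disjoint_edgeSet.2 h.disjoint)
  rcases hH with rfl | rfl <;> rcases hH' with rfl | rfl
  · rfl
  · exact absurd he' (hPQ he)
  · exact absurd he (hPQ he')
  · rfl

end IsSplitAt

theorem IsDesign.isDesign_deleteIncidenceSet (hD : IsDesign G (cycleGraph 4) D)
    {P Q : SimpleGraph β → SimpleGraph β} (hPQ : ∀ B ∈ D, IsSplitAt x B (P B) (Q B)) :
    IsDesign (G.deleteIncidenceSet x) (pathGraph 3) (P '' D ∪ Q '' {B ∈ D | x ∉ B.support}) := by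
  have hhalf : ∀ H ∈ P '' D ∪ Q '' {B ∈ D | x ∉ B.support}, ∃ B ∈ D, H = P B ∨ H = Q B := by
    rintro _ (⟨B, hB, rfl⟩ | ⟨B, ⟨hB, -⟩, rfl⟩)
    exacts [⟨B, hB, .inl rfl⟩, ⟨B, hB, .inr rfl⟩]
  refine .of_cover ?_ ?_ ?_
  · rintro _ (⟨B, hB, rfl⟩ | ⟨B, ⟨hB, hx⟩, rfl⟩)
    · exact ⟨le_deleteIncidenceSet ((hPQ B hB).left_le.trans (hD.1 B hB).1)
        (hPQ B hB).notMem_support_left, (hPQ B hB).isCopy_left⟩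
    · exact ⟨le_deleteIncidenceSet ((hPQ B hB).right_le.trans (hD.1 B hB).1)
        (fun hQ => hx (support_mono (hPQ B hB).right_le hQ)), (hPQ B hB).isCopy_right⟩
  · intro e he
    obtain ⟨heG, hxe⟩ := mem_edgeSet_deleteIncidenceSet.1 he
    obtain ⟨B, ⟨hB, heB⟩, -⟩ := hD.2 e heG
    by_cases hx : x ∈ B.support
    · exact ⟨P B, .inl ⟨B, hB, rfl⟩, edgeSet_mono ((hPQ B hB).deleteIncidenceSet_le hx)
        (mem_edgeSet_deleteIncidenceSet.2 ⟨heB, hxe⟩)⟩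
    · rw [← (hPQ B hB).sup_eq, edgeSet_sup] at heB
      rcases heB with heB | heB
      exacts [⟨P B, .inl ⟨B, hB, rfl⟩, heB⟩, ⟨Q B, .inr ⟨B, ⟨hB, hx⟩, rfl⟩, heB⟩]
  · intro H hH H' hH' e he he'
    obtain ⟨B, hB, hHB⟩ := hhalf H hH
    obtain ⟨B', hB', hHB'⟩ := hhalf H' hH'
    have hle : ∀ {B₀ H₀}, B₀ ∈ D → (H₀ = P B₀ ∨ H₀ = Q B₀) → H₀ ≤ B₀ := by
      rintro B₀ _ hB₀ (rfl | rfl)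
      exacts [(hPQ B₀ hB₀).left_le, (hPQ B₀ hB₀).right_le]
    obtain rfl : B = B' :=
      hD.eq_of_mem_edgeSet_s11 hB hB' (edgeSet_mono (hle hB hHB) he) (edgeSet_mono (hle hB' hHB') he')
    exact (hPQ B hB).eq_of_mem_edgeSet_s11 hHB hHB' he he'

theorem IsDesign.exists_downlink_deleteIncidenceSet (hD : IsDesign G (cycleGraph 4) D) (x : β) :
    ∃ D', IsDesign (G.deleteIncidenceSet x) (pathGraph 3) D' ∧ ∃ f, IsDownlink D D' f := by
  choose! P Q hPQ using fun B hB => (hD.1 B hB).2.1.exists_isSplitAt x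
  exact ⟨_, hD.isDesign_deleteIncidenceSet hPQ, P,
    fun B hB => ⟨.inl ⟨B, hB, rfl⟩, (hPQ B hB).left_le⟩⟩

end DeleteVertex

section CompleteGraphs

variable {s t : Set ℕ} {m n a b : ℕ}

theorem kon_adj {x y : ℕ} : (Kon s).Adj x y ↔ x ≠ y ∧ x ∈ s ∧ y ∈ s := Iff.rfl

theorem kon_mono (h : s ⊆ t) : Kon s ≤ Kon t := fun _ _ ⟨hxy, hx, hy⟩ => ⟨hxy, h hx, h hy⟩

theorem deleteIncidenceSet_kon_Iio_succ (m : ℕ) :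
    (Kon (Set.Iio (m + 1))).deleteIncidenceSet m = Kon (Set.Iio m) := by
  ext x y
  simp only [deleteIncidenceSet_adj, kon_adj, Set.mem_Iio]
  omega

theorem kon_Iio_sdiff_adj {x y : ℕ} :
    (Kon (Set.Iio n) \ Kon (Set.Iio m)).Adj x y ↔ x ≠ y ∧ x < n ∧ y < n ∧ (m ≤ x ∨ m ≤ y) := by
  simp only [sdiff_adj, kon_adj, Set.mem_Iio]
  omega

/-- The paths `c b (c + 1)` with `c ≡ b (mod 2)` cover the edges from `b` to the smaller vertices,
except `0 b` for odd `b`. As `m ≡ 0 (mod 4)`, these leftover edges pair up as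
`0 (m + 4j + 1)`, `0 (m + 4j + 3)`, and `n ≡ 0, 1 (mod 4)` leaves no edge unpaired. -/
def starPaths (m n : ℕ) : Set (SimpleGraph ℕ) :=
  {H | ∃ b c, m ≤ b ∧ b < n ∧ c + 1 < b ∧ c % 2 = b % 2 ∧ H = path3 c b (c + 1)} ∪
    {H | ∃ j, m + 4 * j + 3 < n ∧ H = path3 (m + 4 * j + 1) 0 (m + 4 * j + 3)}

theorem exists_mem_starPaths (hm : m % 4 = 0) (hn : n % 4 = 0 ∨ n % 4 = 1) (hab : a < b)
    (hmb : m ≤ b) (hbn : b < n) : ∃ H ∈ starPaths m n, s(a, b) ∈ H.edgeSet := by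
  by_cases hpar : a % 2 = b % 2
  · refine ⟨path3 a b (a + 1), .inl ⟨b, a, hmb, hbn, by omega, hpar, rfl⟩, ?_⟩
    rw [mem_edgeSet_path3 (by omega) (by omega)]
    exact .inl rfl
  rcases Nat.eq_zero_or_pos a with rfl | ha
  · obtain ⟨j, hj⟩ : ∃ j, b - m = 4 * j + 1 ∨ b - m = 4 * j + 3 := ⟨(b - m) / 4, by omega⟩
    refine ⟨path3 (m + 4 * j + 1) 0 (m + 4 * j + 3), .inr ⟨j, by omega, rfl⟩, ?_⟩
    rw [mem_edgeSet_path3 (by omega) (by omega)]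
    simp only [Sym2.eq_iff, true_and]
    omega
  · refine ⟨path3 (a - 1) b (a - 1 + 1), .inl ⟨b, a - 1, hmb, hbn, by omega, by omega, rfl⟩, ?_⟩
    rw [mem_edgeSet_path3 (by omega) (by omega)]
    simp only [Sym2.eq_iff, and_true]
    omega

theorem isDesign_starPaths (hm : m % 4 = 0) (hn : n % 4 = 0 ∨ n % 4 = 1) :
    IsDesign (Kon (Set.Iio n) \ Kon (Set.Iio m)) (pathGraph 3) (starPaths m n) := by
  refine .of_cover ?_ ?_ ?_
  · rintro _ (⟨b, c, hmb, hbn, hcb, -, rfl⟩ | ⟨j, hj, rfl⟩) <;>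
      exact ⟨path3_le (kon_Iio_sdiff_adj.2 (by omega)) (kon_Iio_sdiff_adj.2 (by omega)),
        isCopy_path3 (by omega) (by omega) (by omega), path3_edgeSet_nonempty (by omega) (by omega)⟩
  · intro e he
    induction e with | _ x y => ?_
    obtain ⟨hxy, hx, hy, hxy_m⟩ := kon_Iio_sdiff_adj.1 he
    rcases hxy.lt_or_gt with h | h
    · exact exists_mem_starPaths hm hn h (by omega) hy
    · exact Sym2.eq_swap (a := x) ▸ exists_mem_starPaths hm hn h (by omega) hx
  · rintro _ (⟨b, c, -, -, hcb, hbc, rfl⟩ | ⟨j, -, rfl⟩) _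
      (⟨b', c', -, -, hcb', hbc', rfl⟩ | ⟨j', -, rfl⟩) e he he' <;>
    rw [mem_edgeSet_path3 (by omega) (by omega)] at he he' <;>
    rcases he with rfl | rfl <;> rcases he' with h | h <;> rw [Sym2.eq_iff] at h <;>
    first | (exfalso; omega) | (congr 1 <;> omega)

end CompleteGraphs

theorem stmt11_general (v : ℕ) (hv1 : v % 8 = 1)
    (D : Set (SimpleGraph ℕ)) (hD : IsDesign (Kon (Set.Iio v)) (cycleGraph 4) D)
    (n : ℕ) (hn : v - 1 ≤ n) (hn4 : n % 4 = 0 ∨ n % 4 = 1) :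
    ∃ D' : Set (SimpleGraph ℕ),
      IsDesign (Kon (Set.Iio n)) (pathGraph 3) D' ∧ ∃ f, IsDownlink D D' f := by
  obtain ⟨m, rfl⟩ : ∃ m, v = m + 1 := ⟨v - 1, by omega⟩
  obtain ⟨D₁, hD₁, f, hf⟩ := hD.exists_downlink_deleteIncidenceSet m
  rw [deleteIncidenceSet_kon_Iio_succ] at hD₁
  have hmn : Kon (Set.Iio m) ≤ Kon (Set.Iio n) := kon_mono (Set.Iio_subset_Iio (by omega))
  refine ⟨D₁ ∪ starPaths m n, ?_, f, hf.mono Set.subset_union_left⟩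
  simpa only [sup_sdiff_cancel_right hmn] using
    hD₁.sup_s11 (isDesign_starPaths (by omega) hn4) disjoint_sdiff_self_right

/-- For every admissible `v ≡ 1 (mod 8)`, `v ≥ 8`, every `(K_v,C₄)`-design can
be down-linked to a `(K_n,P₃)`-design for every `n ≥ v - 1` with
`n ≡ 0, 1 (mod 4)`. -/
theorem stmt11 (v : ℕ) (hv1 : v % 8 = 1) (hv8 : 8 ≤ v)
    (D : Set (SimpleGraph ℕ)) (hD : IsDesign (Kon (Set.Iio v)) (cycleGraph 4) D)
    (n : ℕ) (hn : v - 1 ≤ n) (hn4 : n % 4 = 0 ∨ n % 4 = 1) :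
    ∃ D' : Set (SimpleGraph ℕ),
      IsDesign (Kon (Set.Iio n)) (pathGraph 3) D' ∧ ∃ f, IsDownlink D D' f :=
  stmt11_general v hv1 D hD n hn hn4
end
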